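/- arXiv:0911.4851 — 3 statements merged into one kernel-verified Lean document; each statement's English description precedes it below -/
import Mathlib

section
/- Let g, s be nonnegative integers and a ∈ {0, 1} with s ≤ g + 1, s ≡ g + 1 (mod 2), a = 0 if s = g + 1, and a = 1 if s = 0. Then there exists a connected finite graph G with a real structure such that g(G) = g, s(G) = s, and a(G) = a. -/
/-- A finite graph: finite sets of vertices and edges, and an incidence map
assigning to each edge the (unordered) pair of its ends (loops and multiple
edges are allowed). -/
structure FinGraph where
  V : Type
  E : Type
  [decV : DecidableEq V]
  [fintV : Fintype V]
  [fintE : Fintype E]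
  ψ : E → Sym2 V

attribute [instance] FinGraph.decV FinGraph.fintV FinGraph.fintE

namespace FinGraph

variable (G : FinGraph)

/-- Two vertices are adjacent if some edge has exactly them as its ends. -/
def Adj (v w : G.V) : Prop := ∃ e : G.E, G.ψ e = s(v, w)

/-- A graph is connected if it is nonempty and any two vertices are joined by a
walk (equivalently, related by the reflexive-transitive closure of adjacency). -/
def Connected : Prop := Nonempty G.V ∧ ∀ v w : G.V, Relation.ReflTransGen G.Adj v w

/-- The number of connected components. -/
noncomputable def numComponents : ℕ :=
  Nat.card (Quotient (Relation.EqvGen.setoid G.Adj))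

/-- The genus `g(G) = c(G) + e(G) - v(G)`. -/
noncomputable def genus : ℤ :=
  (numComponents G : ℤ) + (Fintype.card G.E : ℤ) - (Fintype.card G.V : ℤ)

/-- A real structure on a finite graph: involutions on vertices and edges
compatible with the incidence map. -/
structure RealStructure (G : FinGraph) where
  ιV : G.V → G.V
  ιE : G.E → G.E
  ιV_invol : ∀ v, ιV (ιV v) = v
  ιE_invol : ∀ e, ιE (ιE e) = e
  compat : ∀ e, G.ψ (ιE e) = (G.ψ e).map ιV

variable {G} (σ : RealStructure G)

/-- A vertex is real if it is fixed by the involution. -/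
def RealV (v : G.V) : Prop := σ.ιV v = v

/-- An edge is real if it is fixed by the involution. -/
def RealE (e : G.E) : Prop := σ.ιE e = e

/-- A real edge is isolated if some end of it is not a real vertex. -/
def IsolatedRealE (e : G.E) : Prop := RealE σ e ∧ ∃ v ∈ G.ψ e, ¬ RealV σ v

/-- A non-isolated real edge: a real edge all of whose ends are real vertices. -/
def NonIsolatedRealE (e : G.E) : Prop := RealE σ e ∧ ∀ v ∈ G.ψ e, RealV σ v

/-- The vertex set of the real locus graph `G(ℝ)`: the real vertices. -/
def RV := {v : G.V // RealV σ v}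

/-- Adjacency in the real locus graph `G(ℝ)`: via non-isolated real edges. -/
def adjR (v w : RV σ) : Prop :=
  ∃ e : G.E, NonIsolatedRealE σ e ∧ G.ψ e = s(v.1, w.1)

/-- The connected components of the real locus graph `G(ℝ)`. -/
def CompR := Quotient (Relation.EqvGen.setoid (adjR σ))

/-- The genus of a connected component of `G(ℝ)`:
`1 + (number of its edges) - (number of its vertices)`. -/
noncomputable def compGenus (c : CompR σ) : ℤ :=
  1 + (Nat.card {e : G.E // NonIsolatedRealE σ e ∧
        ∃ v : RV σ, v.1 ∈ G.ψ e ∧ Quotient.mk (Relation.EqvGen.setoid (adjR σ)) v = c} : ℤ)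
    - (Nat.card {v : RV σ // Quotient.mk (Relation.EqvGen.setoid (adjR σ)) v = c} : ℤ)

/-- The number `s(G) = e^i(G) + Σ_i (g(G(ℝ)_i) + 1)`. -/
noncomputable def sNum : ℤ :=
  (Nat.card {e : G.E // IsolatedRealE σ e} : ℤ) + ∑ᶠ c : CompR σ, (compGenus σ c + 1)

/-- One step of a walk containing no real vertex and no real edge. -/
def nonRealAdj (v w : G.V) : Prop :=
  ¬ RealV σ v ∧ ¬ RealV σ w ∧ ∃ e : G.E, ¬ RealE σ e ∧ G.ψ e = s(v, w)

/-- `a(G) = 1` iff there is a non-real vertex `v` and a walk from `v` to `v̄`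
containing no real vertex and no real edge. -/
def aProp : Prop :=
  ∃ v : G.V, ¬ RealV σ v ∧ Relation.ReflTransGen (nonRealAdj σ) v (σ.ιV v)

/-- `a(G)` as a number. -/
noncomputable def aNum : ℕ := @ite _ (aProp σ) (Classical.dec _) 1 0

/-- The degree of a divisor (a divisor on `G` is a function `G.V → ℤ`). -/
def deg (D : G.V → ℤ) : ℤ := ∑ v, D v

/-- A divisor is effective if all its coefficients are nonnegative. -/
def Eff (D : G.V → ℤ) : Prop := ∀ v, 0 ≤ D v

variable (G)

/-- The contribution of the edge `e` to the principal divisor `Δ(f)`. -/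
def edgeLap (f : G.V → ℤ) (e : G.E) : G.V → ℤ :=
  Sym2.lift ⟨fun a b v => (if v = a then f b - f a else 0) + (if v = b then f a - f b else 0),
    fun a b => funext fun v => add_comm _ _⟩ (G.ψ e)

/-- The principal divisor `Δ(f)(v) = Σ_{e, ψ(e) = {v,w}} (f(w) - f(v))`. -/
def Lap (f : G.V → ℤ) : G.V → ℤ := fun v => ∑ e, edgeLap G f e v

/-- Two divisors are linearly equivalent if their difference is principal. -/
def LinEquiv (D₁ D₂ : G.V → ℤ) : Prop := ∃ f : G.V → ℤ, D₂ = D₁ + Lap G f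

variable {G}

/-- The conjugate divisor `D̄(v) = D(v̄)`. -/
def conjDiv (D : G.V → ℤ) : G.V → ℤ := fun v => D (σ.ιV v)

/-- A divisor is real if it equals its conjugate. -/
def IsRealDiv (D : G.V → ℤ) : Prop := conjDiv σ D = D

variable (G)

/-- The divisor consisting of the single vertex `v`. -/
def unitDiv (v : G.V) : G.V → ℤ := fun w => if w = v then 1 else 0

/-- `RankGE G D r` : every effective divisor `E` of degree `r` is dominated by
some effective divisor `D'` linearly equivalent to `D`.  The rank `rk(D)` is
the greatest `r` with this property (note it holds vacuously for `r < 0`, so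
the greatest such `r` is `-1` exactly when `|D| = ∅`). -/
def RankGE (D : G.V → ℤ) (r : ℤ) : Prop :=
  ∀ E : G.V → ℤ, Eff E → deg E = r →
    ∃ D' : G.V → ℤ, LinEquiv G D D' ∧ Eff D' ∧ Eff (D' - E)

/-- `r` is the rank of `D`: it is the greatest element of `{r | RankGE G D r}`. -/
def HasRank (D : G.V → ℤ) (r : ℤ) : Prop := IsGreatest {r' : ℤ | RankGE G D r'} r

variable {G}

/-- The real analogue of `RankGE`, using real effective divisors only. -/
def RealRankGE (D : G.V → ℤ) (r : ℤ) : Prop :=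
  ∀ E : G.V → ℤ, Eff E → IsRealDiv σ E → deg E = r →
    ∃ D' : G.V → ℤ, LinEquiv G D D' ∧ Eff D' ∧ IsRealDiv σ D' ∧ Eff (D' - E)

/-- `r` is the real rank of `D`. -/
def HasRealRank (D : G.V → ℤ) (r : ℤ) : Prop :=
  IsGreatest {r' : ℤ | RealRankGE σ D r'} r

/-- An M-graph: a connected graph with a real structure, no isolated real
edges, and `s(G) = g(G) + 1`. -/
def IsMGraph : Prop :=
  G.Connected ∧ (∀ e : G.E, ¬ IsolatedRealE σ e) ∧ sNum σ = G.genus + 1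

/-- A strong M-graph: an M-graph such that `G(ℝ)` has `g(G) + 1` connected
components. -/
def IsStrongMGraph : Prop :=
  IsMGraph σ ∧ (Nat.card (CompR σ) : ℤ) = G.genus + 1

/-- The degree of the restriction of a divisor to the connected component `c`
of the real locus graph `G(ℝ)`. -/
noncomputable def degOn (c : CompR σ) (D : G.V → ℤ) : ℤ :=
  ∑ᶠ (v : {v : RV σ // Quotient.mk (Relation.EqvGen.setoid (adjR σ)) v = c}), D v.1.1

/-- The valence of a vertex: the number of edges incident to it. -/
noncomputable def valence (v : G.V) : ℤ := (Nat.card {e : G.E // v ∈ G.ψ e} : ℤ)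

/-- The canonical divisor `K_G = Σ_v (val(v) - 2) v`. -/
noncomputable def canonicalDiv : G.V → ℤ := fun v => valence v - 2

end FinGraph

/-!
Take two conjugate vertices `p`, `p̄` and `s` real vertices, each joined to `p` and to `p̄` by a
conjugate pair of edges, and add `k = (g + 1 - s) / 2` further conjugate pairs of edges: each pair
joins `p` to `p̄` when `a = 1`, and is a loop at `p` together with a loop at `p̄` when `a = 0`.
No edge is real, so `G(ℝ)` consists of `s` isolated points and `s(G) = s`, while the genus is
`2s + 2k - (s + 2) + 1 = g`. The only non-real vertices are `p` and `p̄`, and a walk between them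
avoiding real vertices exists exactly when some pair of edges joins them.
-/

namespace FinGraph

theorem connected_of_forall_reflTransGen {G : FinGraph} (v : G.V)
    (h : ∀ w, Relation.ReflTransGen G.Adj v w) : G.Connected := by
  have : Std.Symm G.Adj := ⟨fun _ _ ⟨e, he⟩ => ⟨e, he.trans Sym2.eq_swap⟩⟩
  exact ⟨⟨v⟩, fun w w' => (Std.Symm.symm _ _ (h w)).trans (h w')⟩

theorem numComponents_eq_one {G : FinGraph} (hG : G.Connected) : G.numComponents = 1 := by
  obtain ⟨⟨v⟩, hpath⟩ := hG
  rw [numComponents, Nat.card_eq_one_iff_unique]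
  refine ⟨⟨fun x y => Quotient.inductionOn₂ x y fun x y => Quotient.sound ?_⟩, ⟨⟦v⟧⟩⟩
  exact Relation.EqvGen.reflTransGen_le_eqvGen _ _ _ (hpath x y)

theorem genus_eq_of_connected {G : FinGraph} (hG : G.Connected) :
    G.genus = Fintype.card G.E - Fintype.card G.V + 1 := by
  rw [genus, numComponents_eq_one hG]
  push_cast
  ring

section NoRealEdges

variable {G : FinGraph} (σ : RealStructure G) (h : ∀ e, ¬ RealE σ e)
include h

theorem mk_compR_bijective :
    Function.Bijective (Quotient.mk (Relation.EqvGen.setoid (adjR σ))) := by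
  refine ⟨fun v w hvw => ?_, Quotient.mk_surjective⟩
  have hadj : adjR σ ≤ Eq := fun _ _ ⟨e, he, _⟩ => absurd he.1 (h e)
  exact Relation.EqvGen.eqvGen_le hadj _ _ (Quotient.exact hvw)

theorem compGenus_eq_zero (c : CompR σ) : compGenus σ c = 0 := by
  have hE : IsEmpty {e : G.E // NonIsolatedRealE σ e ∧
      ∃ v : RV σ, v.1 ∈ G.ψ e ∧ Quotient.mk (Relation.EqvGen.setoid (adjR σ)) v = c} :=
    ⟨fun e => h e.1 e.2.1.1⟩
  have hV : Nat.card {v : RV σ // Quotient.mk (Relation.EqvGen.setoid (adjR σ)) v = c} = 1 := by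
    obtain ⟨v, hv, huniq⟩ := (mk_compR_bijective σ h).existsUnique c
    exact Nat.card_eq_one_iff_exists.mpr ⟨⟨v, hv⟩, fun w => Subtype.ext (huniq w.1 w.2)⟩
  rw [compGenus, hV, Nat.card_of_isEmpty]
  simp

theorem sNum_eq_card_realV : sNum σ = Nat.card (RV σ) := by
  have hiso : IsEmpty {e : G.E // IsolatedRealE σ e} := ⟨fun e => h e.1 e.2.1⟩
  have : Finite (RV σ) := Subtype.finite
  have : Fintype (CompR σ) := Fintype.ofFinite (Quotient _)
  rw [sNum, Nat.card_of_isEmpty, finsum_congr fun c => by rw [compGenus_eq_zero σ h c],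
    finsum_eq_sum_of_fintype, Nat.card_eq_of_bijective _ (mk_compR_bijective σ h)]
  change _ = ((Nat.card (CompR σ) : ℕ) : ℤ)
  simp [Nat.card_eq_fintype_card]

end NoRealEdges

theorem not_aProp_of_nonRealAdj_eq {G : FinGraph} (σ : RealStructure G)
    (h : ∀ v w, nonRealAdj σ v w → v = w) : ¬ aProp σ := by
  rintro ⟨v, hv, hwalk⟩
  have hloop := Relation.ReflTransGen.mono h _ _ hwalk
  rw [Relation.reflTransGen_eq_self] at hloop
  exact hv hloop.symm

/-- The vertices `.inr false` and `.inr true` are the conjugate pair `p`, `p̄`; the `Bool`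
component of an edge tells the two edges of a conjugate pair apart. -/
abbrev spindle (m k : ℕ) (cross : Bool) : FinGraph where
  V := Fin m ⊕ Bool
  E := (Fin m × Bool) ⊕ (Fin k × Bool)
  ψ
    | .inl (i, b) => s(.inl i, .inr b)
    | .inr (_, b) => if cross then s(.inr false, .inr true) else s(.inr b, .inr b)

abbrev spindleReal (m k : ℕ) (cross : Bool) : RealStructure (spindle m k cross) where
  ιV := Sum.map id not
  ιE := Sum.map (Prod.map id not) (Prod.map id not)
  ιV_invol := by rintro (i | b) <;> simp
  ιE_invol := by rintro (⟨i, b⟩ | ⟨i, b⟩) <;> simp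
  compat := by
    rintro (⟨i, b⟩ | ⟨i, b⟩)
    · rfl
    · cases cross <;> simp [spindle, Sym2.eq_swap]

section Spindle

variable {m k : ℕ} {cross : Bool}

theorem not_realE_spindleReal (e : (spindle m k cross).E) :
    ¬ RealE (spindleReal m k cross) e := by
  rcases e with ⟨i, b⟩ | ⟨i, b⟩ <;> simp [RealE]

theorem realV_spindleReal_iff (v : (spindle m k cross).V) :
    RealV (spindleReal m k cross) v ↔ v.isLeft := by
  rcases v with i | b <;> simp [RealV]

theorem card_realV_spindleReal : Nat.card (RV (spindleReal m k cross)) = m := by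
  have hbij : Function.Bijective fun i : Fin m =>
      (⟨.inl i, (realV_spindleReal_iff _).mpr rfl⟩ : RV (spindleReal m k cross)) := by
    refine ⟨fun i j hij => Sum.inl_injective (congrArg Subtype.val hij), ?_⟩
    rintro ⟨i | b, hv⟩
    · exact ⟨i, rfl⟩
    · simp [realV_spindleReal_iff] at hv
  exact (Nat.card_eq_of_bijective _ hbij).symm.trans (Nat.card_fin m)

theorem sNum_spindleReal : sNum (spindleReal m k cross) = m := by
  rw [sNum_eq_card_realV _ not_realE_spindleReal, card_realV_spindleReal]

theorem spindle_connected (h : 0 < m ∨ cross ∧ 0 < k) : (spindle m k cross).Connected := by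
  refine connected_of_forall_reflTransGen (.inr false) ?_
  rintro (i | _ | _)
  · exact .single ⟨.inl (i, false), Sym2.eq_swap⟩
  · exact .refl
  · rcases h with hm | ⟨rfl, hk⟩
    · exact .head ⟨.inl (⟨0, hm⟩, false), Sym2.eq_swap⟩
        (.single ⟨.inl (⟨0, hm⟩, true), rfl⟩)
    · exact .single ⟨.inr (⟨0, hk⟩, false), rfl⟩

theorem genus_spindle (h : 0 < m ∨ cross ∧ 0 < k) :
    (spindle m k cross).genus = m + 2 * k - 1 := by
  have hV : Fintype.card (spindle m k cross).V = m + 2 := by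
    rw [← Nat.card_eq_fintype_card]; simp
  have hE : Fintype.card (spindle m k cross).E = 2 * m + 2 * k := by
    rw [← Nat.card_eq_fintype_card]; simp; ring
  rw [genus_eq_of_connected (spindle_connected h), hV, hE]
  push_cast
  ring

theorem aNum_spindleReal_true (hk : 0 < k) : aNum (spindleReal m k true) = 1 := by
  have hp : ¬ RealV (spindleReal m k true) (.inr false) := by simp [realV_spindleReal_iff]
  have hp' : ¬ RealV (spindleReal m k true) (.inr true) := by simp [realV_spindleReal_iff]
  refine if_pos ⟨.inr false, hp, .single ⟨hp, hp', .inr (⟨0, hk⟩, false), ?_, rfl⟩⟩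
  exact not_realE_spindleReal _

theorem aNum_spindleReal_false : aNum (spindleReal m k false) = 0 := by
  refine if_neg (not_aProp_of_nonRealAdj_eq _ ?_)
  rintro v w ⟨hv, hw, ⟨i, b⟩ | ⟨i, b⟩, -, hψ⟩
  · have hi : Sum.inl i ∈ s(v, w) := hψ ▸ Sym2.mem_mk_left _ _
    rcases Sym2.mem_iff.mp hi with rfl | rfl
    · simp [realV_spindleReal_iff] at hv
    · simp [realV_spindleReal_iff] at hw
  · obtain ⟨rfl, rfl⟩ | ⟨rfl, rfl⟩ := Sym2.eq_iff.mp hψ <;> rfl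

end Spindle

end FinGraph

open FinGraph in
/-- All invariants `(g, s, a)` allowed by Theorem 1 are
realized by some connected finite graph with a real structure. -/
theorem exists_realGraph_with_invariants (g s a : ℕ) (ha : a = 0 ∨ a = 1)
    (hs : s ≤ g + 1) (hpar : s ≡ g + 1 [MOD 2])
    (hM : s = g + 1 → a = 0) (h0 : s = 0 → a = 1) :
    ∃ (G : FinGraph) (σ : RealStructure G),
      G.Connected ∧ G.genus = (g : ℤ) ∧ sNum σ = (s : ℤ) ∧ aNum σ = a := by
  have hk : s + 2 * ((g + 1 - s) / 2) = g + 1 := by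
    unfold Nat.ModEq at hpar
    omega
  set k := (g + 1 - s) / 2
  have hgenus (cross : Bool) (h : 0 < s ∨ cross ∧ 0 < k) : (spindle s k cross).genus = g := by
    rw [genus_spindle h]
    omega
  rcases ha with rfl | rfl
  · have h : 0 < s := Nat.pos_of_ne_zero fun hs0 => absurd (h0 hs0) (by decide)
    exact ⟨_, spindleReal s k false, spindle_connected (.inl h), hgenus false (.inl h),
      sNum_spindleReal, aNum_spindleReal_false⟩
  · have h : 0 < k := Nat.pos_of_ne_zero fun hk0 => absurd (hM (by omega)) (by decide)
    exact ⟨_, spindleReal s k true, spindle_connected (.inr ⟨rfl, h⟩),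
      hgenus true (.inr ⟨rfl, h⟩), sNum_spindleReal, aNum_spindleReal_true h⟩
end

section
/- Let G be a connected finite graph with a real structure, let D_1 and D_2 be linearly equivalent real divisors on G, and let G' be a connected component of the real locus graph G(ℝ). Then deg(D_1|_{G'}) ≡ deg(D_2|_{G'}) (mod 2), where D|_{G'} denotes the restriction Σ_{v ∈ V(G')} D(v) v. -/
/-!
If `D₂ = D₁ + Δ(f)` with `D₁, D₂` real, then `Δ(f - f̄) = 0`, so `f - f̄` is constant on the
connected graph `G`; being anti-invariant under conjugation it vanishes, i.e. `f` is real.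
The degree of `Δ(f)` on the vertex set `S` of a component of `G(ℝ)` is a sum of edge
contributions. A real edge has both ends in `S` or neither, so it contributes `0`, while the two
edges of a conjugate pair of non-real edges contribute equally, because `f` and the vertices of
`S` are real. Hence the degree is even.
-/

theorem Fintype.two_dvd_sum_of_involutive {α : Type*} [Fintype α] {ι : α → α}
    (hι : Function.Involutive ι) {g : α → ℤ} (hg : ∀ a, g (ι a) = g a)
    (hfix : ∀ a, ι a = a → g a = 0) : (2 : ℤ) ∣ ∑ a, g a := by
  suffices h : ((∑ a, g a : ℤ) : ZMod 2) = 0 by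
    exact_mod_cast (ZMod.intCast_zmod_eq_zero_iff_dvd _ 2).mp h
  rw [Int.cast_sum]
  refine Finset.sum_involution (fun a _ => ι a) (fun a _ => ?_) (fun a _ hne hfixed => ?_)
    (fun a _ => Finset.mem_univ _) (fun a _ => hι a)
  · rw [hg, CharTwo.add_self_eq_zero]
  · exact absurd (by rw [hfix a hfixed, Int.cast_zero]) hne

namespace FinGraph

variable {G : FinGraph}

theorem edgeLap_of_eq {f : G.V → ℤ} {e : G.E} {a b : G.V} (h : G.ψ e = s(a, b)) (v : G.V) :
    edgeLap G f e v = (if v = a then f b - f a else 0) + (if v = b then f a - f b else 0) := by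
  rw [edgeLap, h, Sym2.lift_mk]

theorem Lap_sub (f g : G.V → ℤ) : Lap G (f - g) = Lap G f - Lap G g := by
  ext v
  simp only [Lap, Pi.sub_apply, ← Finset.sum_sub_distrib]
  refine Finset.sum_congr rfl fun e _ => ?_
  induction h : G.ψ e using Sym2.ind with
  | h a b =>
    simp only [edgeLap_of_eq h, Pi.sub_apply]
    split_ifs <;> ring

theorem sum_mul_edgeLap_of_eq {g : G.V → ℤ} {e : G.E} {a b : G.V} (h : G.ψ e = s(a, b)) :
    ∑ v, g v * edgeLap G g e v = -(g a - g b) ^ 2 := by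
  simp only [edgeLap_of_eq h, mul_add, mul_ite, mul_zero, Finset.sum_add_distrib,
    Finset.sum_ite_eq', Finset.mem_univ, if_true]
  ring

theorem sum_mul_Lap (g : G.V → ℤ) : ∑ v, g v * Lap G g v = ∑ e, ∑ v, g v * edgeLap G g e v := by
  simp only [Lap, Finset.mul_sum]
  exact Finset.sum_comm

/-- Energy argument: `∑ v, g v * Δ(g)(v)` is minus the sum of `(g a - g b)²` over all edges. -/
theorem eq_of_Lap_eq_zero {g : G.V → ℤ} (hg : Lap G g = 0) {e : G.E} {a b : G.V}
    (h : G.ψ e = s(a, b)) : g a = g b := by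
  have hnonpos : ∀ e ∈ Finset.univ, ∑ v, g v * edgeLap G g e v ≤ 0 := fun e _ => by
    induction h : G.ψ e using Sym2.ind with
    | h a b => rw [sum_mul_edgeLap_of_eq h]; nlinarith [sq_nonneg (g a - g b)]
  have htotal : ∑ e, ∑ v, g v * edgeLap G g e v = 0 := by
    simp [← sum_mul_Lap, hg]
  have := (Finset.sum_eq_zero_iff_of_nonpos hnonpos).mp htotal e (Finset.mem_univ e)
  rw [sum_mul_edgeLap_of_eq h] at this
  nlinarith [sq_nonneg (g a - g b)]

theorem Connected.eq_of_Lap_eq_zero (hG : G.Connected) {g : G.V → ℤ} (hg : Lap G g = 0)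
    (v w : G.V) : g v = g w := by
  induction hG.2 v w with
  | refl => rfl
  | tail _ hadj ih =>
    obtain ⟨e, he⟩ := hadj
    exact ih.trans (FinGraph.eq_of_Lap_eq_zero hg he)

section Real

variable (σ : RealStructure G)

theorem edgeLap_conj (f : G.V → ℤ) (e : G.E) (v : G.V) :
    edgeLap G f (σ.ιE e) (σ.ιV v) = edgeLap G (conjDiv σ f) e v := by
  induction h : G.ψ e using Sym2.ind with
  | h a b =>
    have hconj : G.ψ (σ.ιE e) = s(σ.ιV a, σ.ιV b) := by rw [σ.compat, h, Sym2.map_mk]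
    have hinj : Function.Injective σ.ιV := Function.Involutive.injective σ.ιV_invol
    simp only [edgeLap_of_eq hconj, edgeLap_of_eq h, hinj.eq_iff, conjDiv]

theorem conjDiv_Lap (f : G.V → ℤ) : conjDiv σ (Lap G f) = Lap G (conjDiv σ f) := by
  ext v
  simp only [conjDiv, Lap, ← edgeLap_conj]
  have hι : Function.Involutive σ.ιE := σ.ιE_invol
  exact Fintype.sum_equiv hι.toPerm _ _ fun e => by rw [hι.coe_toPerm, hι]

theorem isRealDiv_of_eq_add_Lap (hG : G.Connected) {D₁ D₂ f : G.V → ℤ} (h₁ : IsRealDiv σ D₁)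
    (h₂ : IsRealDiv σ D₂) (hf : D₂ = D₁ + Lap G f) : IsRealDiv σ f := by
  have hreal : conjDiv σ (Lap G f) = Lap G f := by
    rw [show Lap G f = D₂ - D₁ by rw [hf]; abel]
    show conjDiv σ D₂ - conjDiv σ D₁ = _
    rw [h₁, h₂]
  have hharmonic : Lap G (f - conjDiv σ f) = 0 := by
    rw [Lap_sub, ← conjDiv_Lap, hreal, sub_self]
  funext v
  have := hG.eq_of_Lap_eq_zero hharmonic v (σ.ιV v)
  simp only [Pi.sub_apply, conjDiv, σ.ιV_invol] at this
  show f (σ.ιV v) = f v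
  linarith

theorem realV_iff_of_realE {e : G.E} {a b : G.V} (he : RealE σ e) (h : G.ψ e = s(a, b)) :
    RealV σ a ↔ RealV σ b := by
  have hconj : s(σ.ιV a, σ.ιV b) = s(a, b) := by rw [← Sym2.map_mk, ← h, ← σ.compat, he]
  unfold RealV
  rcases Sym2.eq_iff.mp hconj with ⟨ha, hb⟩ | ⟨ha, hb⟩
  · exact iff_of_true ha hb
  · rw [ha, hb]
    exact eq_comm

variable {σ} {S : Finset G.V} {f : G.V → ℤ}

theorem sum_edgeLap_conj (hS : ∀ v ∈ S, RealV σ v) (hf : IsRealDiv σ f) (e : G.E) :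
    ∑ v ∈ S, edgeLap G f (σ.ιE e) v = ∑ v ∈ S, edgeLap G f e v :=
  Finset.sum_congr rfl fun v hv => by
    conv_lhs => rw [← hS v hv]
    rw [edgeLap_conj, hf]

theorem sum_edgeLap_of_mem_iff {e : G.E} {a b : G.V} (h : G.ψ e = s(a, b))
    (hab : a ∈ S ↔ b ∈ S) : ∑ v ∈ S, edgeLap G f e v = 0 := by
  rw [Finset.sum_congr rfl fun v _ => edgeLap_of_eq h v, Finset.sum_add_distrib,
    Finset.sum_ite_eq', Finset.sum_ite_eq']
  simp only [← hab]
  split_ifs <;> ring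

theorem sum_edgeLap_of_realE (hS : ∀ v ∈ S, RealV σ v)
    (hS_closed : ∀ e a b, NonIsolatedRealE σ e → G.ψ e = s(a, b) → (a ∈ S ↔ b ∈ S))
    {e : G.E} (he : RealE σ e) : ∑ v ∈ S, edgeLap G f e v = 0 := by
  induction h : G.ψ e using Sym2.ind with
  | h a b =>
    refine sum_edgeLap_of_mem_iff h ?_
    by_cases ha : RealV σ a
    · have hb := (realV_iff_of_realE σ he h).mp ha
      refine hS_closed e a b ⟨he, ?_⟩ h
      intro v hv
      rw [h, Sym2.mem_iff] at hv
      rcases hv with rfl | rfl <;> assumption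
    · have hb : ¬ RealV σ b := by rwa [← realV_iff_of_realE σ he h]
      exact iff_of_false (fun h => ha (hS a h)) (fun h => hb (hS b h))

theorem two_dvd_sum_Lap (hS : ∀ v ∈ S, RealV σ v)
    (hS_closed : ∀ e a b, NonIsolatedRealE σ e → G.ψ e = s(a, b) → (a ∈ S ↔ b ∈ S))
    (hf : IsRealDiv σ f) : (2 : ℤ) ∣ ∑ v ∈ S, Lap G f v := by
  simp only [Lap]
  rw [Finset.sum_comm]
  exact Fintype.two_dvd_sum_of_involutive σ.ιE_invol (sum_edgeLap_conj hS hf)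
    fun e he => sum_edgeLap_of_realE hS hS_closed he

variable (σ) in
open Classical in
noncomputable def compVerts (c : CompR σ) : Finset G.V :=
  {v | ∃ hv : RealV σ v, Quotient.mk (Relation.EqvGen.setoid (adjR σ)) ⟨v, hv⟩ = c}

variable {c : CompR σ}

theorem mem_compVerts {v : G.V} :
    v ∈ compVerts σ c ↔
      ∃ hv : RealV σ v, Quotient.mk (Relation.EqvGen.setoid (adjR σ)) ⟨v, hv⟩ = c := by
  simp [compVerts]

theorem realV_of_mem_compVerts {v : G.V} (hv : v ∈ compVerts σ c) : RealV σ v :=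
  (mem_compVerts.mp hv).1

theorem mem_compVerts_iff_of_nonIsolatedRealE {e : G.E} {a b : G.V} (he : NonIsolatedRealE σ e)
    (h : G.ψ e = s(a, b)) : a ∈ compVerts σ c ↔ b ∈ compVerts σ c := by
  have ha : RealV σ a := he.2 a (by simp [h])
  have hb : RealV σ b := he.2 b (by simp [h])
  have hab : Quotient.mk (Relation.EqvGen.setoid (adjR σ)) ⟨a, ha⟩ = Quotient.mk _ ⟨b, hb⟩ :=
    Quotient.sound (Relation.EqvGen.rel _ _ ⟨e, he, h⟩)
  rw [mem_compVerts, mem_compVerts]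
  exact ⟨fun ⟨_, hc⟩ => ⟨hb, hab ▸ hc⟩, fun ⟨_, hc⟩ => ⟨ha, hab ▸ hc⟩⟩

theorem degOn_eq_sum (D : G.V → ℤ) : degOn σ c D = ∑ v ∈ compVerts σ c, D v := by
  classical
  have : Fintype (RV σ) := Subtype.fintype _
  rw [degOn, finsum_eq_sum_of_fintype]
  refine Finset.sum_bij (fun v _ => v.1.1) (fun v _ => mem_compVerts.mpr ⟨v.1.2, v.2⟩)
    (fun v _ w _ hvw => Subtype.ext (Subtype.ext hvw)) (fun v hv => ?_) fun _ _ => rfl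
  obtain ⟨hreal, hc⟩ := mem_compVerts.mp hv
  exact ⟨⟨⟨v, hreal⟩, hc⟩, Finset.mem_univ _, rfl⟩

theorem degOn_sub (D₁ D₂ : G.V → ℤ) : degOn σ c (D₂ - D₁) = degOn σ c D₂ - degOn σ c D₁ := by
  simp only [degOn_eq_sum, Pi.sub_apply, Finset.sum_sub_distrib]

end Real

end FinGraph

open FinGraph in
/-- The parity of the degree of the restriction of a real
divisor to a connected component of `G(ℝ)` is invariant under linear
equivalence. -/
theorem degOn_parity_invariant (G : FinGraph) (σ : RealStructure G)
    (hG : G.Connected) (D₁ D₂ : G.V → ℤ) (h₁ : IsRealDiv σ D₁)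
    (h₂ : IsRealDiv σ D₂) (h : LinEquiv G D₁ D₂) (c : CompR σ) :
    degOn σ c D₁ ≡ degOn σ c D₂ [ZMOD 2] := by
  obtain ⟨f, hf⟩ := h
  have hf_real : IsRealDiv σ f := isRealDiv_of_eq_add_Lap σ hG h₁ h₂ hf
  rw [Int.modEq_iff_dvd, ← degOn_sub, show D₂ - D₁ = Lap G f by rw [hf]; abel, degOn_eq_sum]
  exact two_dvd_sum_Lap (fun _ => realV_of_mem_compVerts)
    (fun _ _ _ he h => mem_compVerts_iff_of_nonIsolatedRealE he h) hf_real
end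

section
/- Let G be an M-graph and let D be an effective real divisor on G. Then D is linearly equivalent to a totally real effective divisor on G. -/
/-!
Contract every connected component of the real locus `G(ℝ)` to a point, delete the real edges
and identify conjugate non-real vertices and edges. A count of vertices and edges shows that
`s(G) = g(G) + 1` says precisely that this connected quotient has one edge fewer than vertices,
so it is a tree; root it at a real component. If `D` has a chip on a non-real vertex `v`, fire
all vertices of `G` lying over the subtree below the image of `v`: only the two lifts of the
parent edge leave that set, so the firing moves one chip from each of `v` and `v̄` one step
closer to the root and keeps `D` effective and real. The total depth of the chips drops, so
after finitely many firings all chips sit on real vertices.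
-/

theorem exists_of_descent {α : Type*} {R : α → α → Prop} {P Q : α → Prop}
    (hrefl : ∀ a, R a a) (htrans : ∀ {a b c}, R a b → R b c → R a c) (φ : α → ℕ)
    (hstep : ∀ a, P a → ¬ Q a → ∃ b, R a b ∧ P b ∧ φ b < φ a) :
    ∀ a, P a → ∃ b, R a b ∧ P b ∧ Q b := by
  intro a
  induction hφ : φ a using Nat.strong_induction_on generalizing a with
  | _ n ih =>
    intro ha
    by_cases hQ : Q a
    · exact ⟨a, hrefl a, ha, hQ⟩
    obtain ⟨b, hab, hb, hlt⟩ := hstep a ha hQ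
    obtain ⟨c, hbc, hc, hQc⟩ := ih _ (hφ ▸ hlt) b rfl hb
    exact ⟨c, htrans hab hbc, hc, hQc⟩

lemma Nat.card_eq_sum_card_fiber {X C : Type*} [Finite X] [Fintype C] (f : X → C) :
    Nat.card X = ∑ c, Nat.card {x // f x = c} := by
  rw [← Nat.card_sigma, Nat.card_congr (Equiv.sigmaFiberEquiv f)]

namespace Function.Involutive

variable {γ : Type*} {i : γ → γ} (hi : Involutive i)

def pairSetoid : Setoid {x // i x ≠ x} where
  r a b := b.1 = a.1 ∨ b.1 = i a.1
  iseqv :=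
    { refl := fun _ => Or.inl rfl
      symm := by
        rintro a b (h | h)
        · exact Or.inl h.symm
        · exact Or.inr (by rw [h, hi])
      trans := by
        rintro a b c (h | h) (h' | h')
        · exact Or.inl (h'.trans h)
        · exact Or.inr (by rw [h', h])
        · exact Or.inr (h'.trans h)
        · exact Or.inl (by rw [h', h, hi]) }

lemma mk_pairSetoid_eq_iff {a b : {x // i x ≠ x}} :
    Quotient.mk hi.pairSetoid a = Quotient.mk _ b ↔ b.1 = a.1 ∨ b.1 = i a.1 :=
  Quotient.eq

lemma card_eq_two_mul_card_quotient [Finite γ] :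
    Nat.card {x // i x ≠ x} = 2 * Nat.card (Quotient hi.pairSetoid) := by
  have := Fintype.ofFinite (Quotient hi.pairSetoid)
  have hfiber (c : Quotient hi.pairSetoid) : Nat.card {x // Quotient.mk _ x = c} = 2 := by
    induction c using Quotient.ind with
    | _ a =>
      let a' : {x // i x ≠ x} := ⟨i a, by rw [hi]; exact fun h => a.2 h.symm⟩
      refine Nat.card_eq_two_iff.2 ⟨⟨a, rfl⟩, ⟨a', Quotient.sound (Or.inr (hi a).symm)⟩, ?_, ?_⟩
      · exact fun h => a.2 (congrArg (·.1.1) h).symm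
      · ext ⟨x, hx⟩
        rcases Quotient.exact hx with h | h
        · simp [← Subtype.ext h]
        · simp [a', Subtype.ext_iff, h, hi x]
  rw [Nat.card_eq_sum_card_fiber (Quotient.mk hi.pairSetoid),
    Finset.sum_congr rfl fun c _ => hfiber c, Finset.sum_const, Finset.card_univ, smul_eq_mul,
    Nat.card_eq_fintype_card, mul_comm]

end Function.Involutive

namespace FinGraph

section Laplacian

variable {G : FinGraph}

lemma exists_ψ_eq (e : G.E) : ∃ a b, G.ψ e = s(a, b) := by
  induction G.ψ e using Sym2.ind with
  | _ a b => exact ⟨a, b, rfl⟩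

lemma edgeLap_of_ψ_eq {f : G.V → ℤ} {e : G.E} {a b : G.V} (h : G.ψ e = s(a, b)) :
    edgeLap G f e = Pi.single a (f b - f a) + Pi.single b (f a - f b) := by
  ext x
  simp [edgeLap, h, Pi.single_apply]

lemma edgeLap_eq_zero {f : G.V → ℤ} {e : G.E} (h : ∀ a b, G.ψ e = s(a, b) → f a = f b) :
    edgeLap G f e = 0 := by
  obtain ⟨a, b, hab⟩ := exists_ψ_eq e
  simp [edgeLap_of_ψ_eq hab, h a b hab]

lemma Lap_eq_sum_edgeLap (f : G.V → ℤ) : Lap G f = ∑ e, edgeLap G f e := by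
  ext v
  simp [Lap]

lemma Lap_eq_sum_of_forall_notMem {f : G.V → ℤ} (s : Finset G.E)
    (hs : ∀ e ∉ s, ∀ a b, G.ψ e = s(a, b) → f a = f b) :
    Lap G f = ∑ e ∈ s, edgeLap G f e := by
  rw [Lap_eq_sum_edgeLap]
  exact (Finset.sum_subset (Finset.subset_univ s) fun e _ he => edgeLap_eq_zero (hs e he)).symm

lemma Lap_add (f g : G.V → ℤ) : Lap G (f + g) = Lap G f + Lap G g := by
  simp only [Lap_eq_sum_edgeLap, ← Finset.sum_add_distrib]
  refine Finset.sum_congr rfl fun e _ => ?_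
  obtain ⟨a, b, hab⟩ := exists_ψ_eq e
  ext x
  simp only [edgeLap_of_ψ_eq hab, Pi.add_apply, Pi.single_apply]
  split_ifs <;> ring

lemma Lap_zero : Lap G 0 = 0 := by
  simpa using Lap_add (G := G) 0 0

lemma LinEquiv.refl (D : G.V → ℤ) : LinEquiv G D D :=
  ⟨0, by rw [Lap_zero, add_zero]⟩

lemma LinEquiv.trans {D₁ D₂ D₃ : G.V → ℤ} (h₁ : LinEquiv G D₁ D₂) (h₂ : LinEquiv G D₂ D₃) :
    LinEquiv G D₁ D₃ := by
  obtain ⟨f, rfl⟩ := h₁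
  obtain ⟨g, rfl⟩ := h₂
  exact ⟨f + g, by rw [Lap_add, add_assoc]⟩

end Laplacian

section SpanningTree

variable {H : FinGraph}

def ReachIn (H : FinGraph) (r : H.V) : ℕ → H.V → Prop
  | 0, a => a = r
  | n + 1, a => ∃ b, ReachIn H r n b ∧ H.Adj b a

noncomputable def distFrom (H : FinGraph) (r a : H.V) : ℕ := sInf {n | ReachIn H r n a}

lemma exists_reachIn {r a : H.V} (h : Relation.ReflTransGen H.Adj r a) :
    ∃ n, ReachIn H r n a := by
  induction h with
  | refl => exact ⟨0, rfl⟩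
  | tail _ hbc ih =>
    obtain ⟨n, hn⟩ := ih
    exact ⟨n + 1, _, hn, hbc⟩

lemma Connected.exists_adj_distFrom_lt (hH : H.Connected) {r a : H.V} (ha : a ≠ r) :
    ∃ b e, H.ψ e = s(b, a) ∧ distFrom H r b < distFrom H r a := by
  have hreach : ReachIn H r (distFrom H r a) a := Nat.sInf_mem (exists_reachIn (hH.2 r a))
  cases hn : distFrom H r a with
  | zero => exact absurd (hn ▸ hreach : ReachIn H r 0 a) ha
  | succ n =>
    obtain ⟨b, hb, e, he⟩ := (hn ▸ hreach : ReachIn H r (n + 1) a)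
    exact ⟨b, e, he, Nat.lt_succ_of_le (Nat.sInf_le hb)⟩

structure RootedSpanningTree (H : FinGraph) (r : H.V) where
  depth : H.V → ℕ
  parent : H.V → H.V
  parentEdge : {a : H.V // a ≠ r} → H.E
  ψ_parentEdge : ∀ a, H.ψ (parentEdge a) = s(parent a, a)
  depth_parent_lt : ∀ a, a ≠ r → depth (parent a) < depth a

lemma Connected.nonempty_rootedSpanningTree (hH : H.Connected) (r : H.V) :
    Nonempty (RootedSpanningTree H r) := by
  choose p pe hpe hlt using fun a : {a : H.V // a ≠ r} => hH.exists_adj_distFrom_lt a.2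
  refine ⟨{ depth := distFrom H r
            parent := fun a => if h : a = r then r else p ⟨a, h⟩
            parentEdge := pe
            ψ_parentEdge := fun a => ?_
            depth_parent_lt := fun a ha => ?_ }⟩
  · simpa [a.2] using hpe a
  · simpa [ha] using hlt ⟨a, ha⟩

namespace RootedSpanningTree

variable {r : H.V} (T : RootedSpanningTree H r)

lemma parentEdge_injective : Function.Injective T.parentEdge := by
  intro a b hab
  have h := T.ψ_parentEdge a
  rw [hab, T.ψ_parentEdge b, Sym2.eq_iff] at h
  rcases h with ⟨-, h⟩ | ⟨hb, ha⟩
  · exact Subtype.ext h.symm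
  · have hlt := T.depth_parent_lt a a.2
    have hlt' := T.depth_parent_lt b b.2
    rw [← ha] at hlt
    rw [hb] at hlt'
    omega

lemma card_V_le_card_E_add_one (T : RootedSpanningTree H r) :
    Fintype.card H.V ≤ Fintype.card H.E + 1 := by
  have := Fintype.card_le_of_injective _ T.parentEdge_injective
  rw [Fintype.card_subtype_compl, Fintype.card_subtype_eq] at this
  omega

lemma parentEdge_surjective (hcard : Nat.card H.E + 1 = Nat.card H.V) :
    Function.Surjective T.parentEdge := by
  rw [Nat.card_eq_fintype_card, Nat.card_eq_fintype_card] at hcard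
  refine ((Fintype.bijective_iff_injective_and_card _).2 ⟨T.parentEdge_injective, ?_⟩).2
  rw [Fintype.card_subtype_compl, Fintype.card_subtype_eq]
  omega

def subtree (u : H.V) : Set H.V :=
  {z | Relation.ReflTransGen (fun x y => x ≠ r ∧ y = T.parent x) z u}

lemma mem_subtree_self (u : H.V) : u ∈ T.subtree u := Relation.ReflTransGen.refl

lemma mem_subtree_of_parent_mem {u z : H.V} (hz : z ≠ r) (h : T.parent z ∈ T.subtree u) :
    z ∈ T.subtree u :=
  Relation.ReflTransGen.head ⟨hz, rfl⟩ h

lemma parent_mem_subtree {u z : H.V} (h : z ∈ T.subtree u) (hz : z ≠ u) :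
    T.parent z ∈ T.subtree u := by
  rcases Relation.ReflTransGen.cases_head h with h | ⟨c, ⟨-, rfl⟩, hc⟩
  · exact absurd h hz
  · exact hc

lemma depth_le_of_mem_subtree {u z : H.V} (h : z ∈ T.subtree u) : T.depth u ≤ T.depth z := by
  induction h with
  | refl => exact le_rfl
  | tail _ hxy ih =>
    obtain ⟨hx, rfl⟩ := hxy
    exact (T.depth_parent_lt _ hx).le.trans ih

lemma parent_notMem_subtree {u : H.V} (hu : u ≠ r) : T.parent u ∉ T.subtree u := fun h =>
  (T.depth_le_of_mem_subtree h).not_gt (T.depth_parent_lt u hu)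

/-- With one edge fewer than vertices every edge is a parent edge, and a parent edge leaving
the subtree below `u` can only be the one of `u` itself. -/
lemma eq_parentEdge_of_mem_subtree (hcard : Nat.card H.E + 1 = Nat.card H.V)
    {u x y : H.V} (hu : u ≠ r) {e : H.E} (he : H.ψ e = s(x, y))
    (hx : x ∈ T.subtree u) (hy : y ∉ T.subtree u) : e = T.parentEdge ⟨u, hu⟩ := by
  obtain ⟨w, rfl⟩ := T.parentEdge_surjective hcard e
  have h := T.ψ_parentEdge w
  rw [he, Sym2.eq_iff] at h
  rcases h with ⟨rfl, rfl⟩ | ⟨rfl, rfl⟩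
  · exact absurd (T.mem_subtree_of_parent_mem w.2 hx) hy
  · by_cases hwu : w.1 = u
    · exact congrArg _ (Subtype.ext hwu)
    · exact absurd (T.parent_mem_subtree hx hwu) hy

end RootedSpanningTree

lemma Connected.card_V_le_card_E_add_one (hH : H.Connected) :
    Fintype.card H.V ≤ Fintype.card H.E + 1 := by
  obtain ⟨r⟩ := hH.1
  exact (hH.nonempty_rootedSpanningTree r).some.card_V_le_card_E_add_one

lemma Connected.numComponents_eq_one (hH : H.Connected) : H.numComponents = 1 := by
  rw [numComponents, Nat.card_eq_one_iff_unique]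
  refine ⟨⟨fun a b => ?_⟩, hH.1.map (Quotient.mk _)⟩
  induction a using Quotient.ind
  induction b using Quotient.ind
  exact Quotient.sound (Relation.EqvGen.reflTransGen_le_eqvGen _ _ _ (hH.2 _ _))

end SpanningTree

section QuotientGraph

open scoped Classical

variable {G : FinGraph} (σ : RealStructure G)

lemma RealStructure.ιV_involutive : Function.Involutive σ.ιV := σ.ιV_invol

lemma RealStructure.ιE_involutive : Function.Involutive σ.ιE := σ.ιE_invol

lemma ιV_eq_iff {x y : G.V} : σ.ιV x = y ↔ x = σ.ιV y :=
  ⟨fun h => by rw [← h, σ.ιV_invol], fun h => by rw [h, σ.ιV_invol]⟩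

instance : Finite (RV σ) := Subtype.finite
instance : Finite (CompR σ) := Quotient.finite _

abbrev PairV := Quotient σ.ιV_involutive.pairSetoid

abbrev PairE := Quotient σ.ιE_involutive.pairSetoid

noncomputable def quotientMap (v : G.V) : CompR σ ⊕ PairV σ :=
  if h : RealV σ v then .inl (Quotient.mk _ ⟨v, h⟩) else .inr (Quotient.mk _ ⟨v, h⟩)

lemma quotientMap_ιV (v : G.V) : quotientMap σ (σ.ιV v) = quotientMap σ v := by
  by_cases h : RealV σ v
  · rw [h]
  have h' : ¬ RealV σ (σ.ιV v) := fun h' => h (by simpa [RealV, σ.ιV_invol] using h'.symm)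
  rw [quotientMap, quotientMap, dif_neg h, dif_neg h']
  exact congrArg Sum.inr ((σ.ιV_involutive.mk_pairSetoid_eq_iff).2 (Or.inr (σ.ιV_invol v).symm))

lemma eq_or_eq_ιV_of_quotientMap_eq {a v : G.V} (hv : ¬ RealV σ v)
    (h : quotientMap σ a = quotientMap σ v) : a = v ∨ a = σ.ιV v := by
  by_cases ha : RealV σ a
  · simp [quotientMap, ha, hv] at h
  rw [quotientMap, quotientMap, dif_neg ha, dif_neg hv] at h
  rcases (σ.ιV_involutive.mk_pairSetoid_eq_iff).1 (Sum.inr_injective h) with h | h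
  · exact Or.inl h.symm
  · exact Or.inr (by rw [show v = σ.ιV a from h, σ.ιV_invol])

lemma quotientMap_surjective : Function.Surjective (quotientMap σ) := by
  rintro (c | p)
  · induction c using Quotient.ind with
    | _ v => exact ⟨v.1, by rw [quotientMap, dif_pos v.2]; rfl⟩
  · induction p using Quotient.ind with
    | _ v => exact ⟨v.1, by rw [quotientMap, dif_neg (show ¬ RealV σ v.1 from v.2)]⟩

noncomputable def quotientψ : PairE σ → Sym2 (CompR σ ⊕ PairV σ) :=
  Quotient.lift (fun e => (G.ψ e.1).map (quotientMap σ)) <| by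
    rintro a b (h | h)
    · rw [h]
    · simp only [h, σ.compat, Sym2.map_map]
      congr 1
      exact funext fun v => (quotientMap_ιV σ v).symm

/-- The graph obtained from `G` by contracting every connected component of `G(ℝ)` to a
vertex, deleting the real edges and identifying conjugate non-real vertices and edges. -/
noncomputable abbrev quotientGraph : FinGraph where
  V := CompR σ ⊕ PairV σ
  E := PairE σ
  decV := Classical.decEq _
  fintV := Fintype.ofFinite _
  fintE := Fintype.ofFinite _
  ψ := quotientψ σ

lemma quotientGraph_ψ_mk (e : {e : G.E // σ.ιE e ≠ e}) :
    (quotientGraph σ).ψ (Quotient.mk _ e) = (G.ψ e.1).map (quotientMap σ) := rfl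

lemma realV_of_mem_of_realE (hiso : ∀ e, ¬ IsolatedRealE σ e) {e : G.E} (he : RealE σ e)
    {v : G.V} (hv : v ∈ G.ψ e) : RealV σ v :=
  by_contra fun h => hiso e ⟨he, v, hv, h⟩

lemma compR_mk_eq_of_mem {e : G.E} (he : NonIsolatedRealE σ e) {a b : RV σ}
    (ha : a.1 ∈ G.ψ e) (hb : b.1 ∈ G.ψ e) :
    Quotient.mk (Relation.EqvGen.setoid (adjR σ)) a = Quotient.mk _ b := by
  by_cases hab : a = b
  · rw [hab]
  refine Quotient.sound (Relation.EqvGen.rel _ _ ⟨e, he, ?_⟩)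
  exact (Sym2.mem_and_mem_iff fun h => hab (Subtype.ext h)).1 ⟨ha, hb⟩

lemma quotientMap_eq_of_realE (hiso : ∀ e, ¬ IsolatedRealE σ e) {e : G.E} (he : RealE σ e)
    {a b : G.V} (hab : G.ψ e = s(a, b)) : quotientMap σ a = quotientMap σ b := by
  have hends := fun v => realV_of_mem_of_realE σ hiso he (v := v)
  have ha := hends a (by simp [hab])
  have hb := hends b (by simp [hab])
  rw [quotientMap, quotientMap, dif_pos ha, dif_pos hb]
  exact congrArg Sum.inl <| compR_mk_eq_of_mem σ ⟨he, hends⟩ (a := ⟨a, ha⟩) (b := ⟨b, hb⟩)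
    (by simp [hab]) (by simp [hab])

lemma Connected.quotientGraph (hG : G.Connected) (hiso : ∀ e, ¬ IsolatedRealE σ e) :
    (quotientGraph σ).Connected := by
  refine ⟨hG.1.map (quotientMap σ), fun x y => ?_⟩
  obtain ⟨a, rfl⟩ := quotientMap_surjective σ x
  obtain ⟨b, rfl⟩ := quotientMap_surjective σ y
  refine Relation.ReflTransGen.lift' (quotientMap σ) (fun c d ⟨e, he⟩ => ?_) _ _ (hG.2 a b)
  by_cases hre : RealE σ e
  · show Relation.ReflTransGen _ (quotientMap σ c) (quotientMap σ d)
    rw [quotientMap_eq_of_realE σ hiso hre he]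
  · exact .single ⟨Quotient.mk _ ⟨e, hre⟩,
      (quotientGraph_ψ_mk σ ⟨e, hre⟩).trans (by rw [he]; rfl)⟩

end QuotientGraph

section Counting

open scoped Classical

variable {G : FinGraph} (σ : RealStructure G)

noncomputable def realEdgeComp (e : {e : G.E // NonIsolatedRealE σ e}) : CompR σ :=
  Quotient.mk _ ⟨(G.ψ e.1).out.1, e.2.2 _ (Sym2.out_fst_mem _)⟩

lemma card_compEdges_eq_card_fiber (c : CompR σ) :
    Nat.card {e : G.E // NonIsolatedRealE σ e ∧
        ∃ v : RV σ, v.1 ∈ G.ψ e ∧ Quotient.mk (Relation.EqvGen.setoid (adjR σ)) v = c} =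
      Nat.card {e : {e : G.E // NonIsolatedRealE σ e} // realEdgeComp σ e = c} := by
  refine Nat.card_congr ((Equiv.subtypeSubtypeEquivSubtypeInter _ _).symm.trans
    (Equiv.subtypeEquivRight fun e => ⟨?_, fun h => ⟨_, Sym2.out_fst_mem _, h⟩⟩))
  rintro ⟨v, hv, rfl⟩
  exact compR_mk_eq_of_mem σ e.2 (Sym2.out_fst_mem _) hv

lemma sNum_eq (hiso : ∀ e, ¬ IsolatedRealE σ e) :
    sNum σ = 2 * Nat.card (CompR σ) + Nat.card {e : G.E // NonIsolatedRealE σ e} -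
      Nat.card (RV σ) := by
  have : IsEmpty {e // IsolatedRealE σ e} := ⟨fun e => hiso e.1 e.2⟩
  have := Fintype.ofFinite (CompR σ)
  have hV : ∑ c : CompR σ,
      (Nat.card {v : RV σ // Quotient.mk (Relation.EqvGen.setoid (adjR σ)) v = c} : ℤ) =
        Nat.card (RV σ) := by
    exact_mod_cast (Nat.card_eq_sum_card_fiber (C := CompR σ) (Quotient.mk _)).symm
  have hE : ∑ c : CompR σ, (Nat.card {e : G.E // NonIsolatedRealE σ e ∧
        ∃ v : RV σ, v.1 ∈ G.ψ e ∧ Quotient.mk (Relation.EqvGen.setoid (adjR σ)) v = c} : ℤ) =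
        Nat.card {e : G.E // NonIsolatedRealE σ e} := by
    simp only [card_compEdges_eq_card_fiber]
    exact_mod_cast (Nat.card_eq_sum_card_fiber (realEdgeComp σ)).symm
  rw [sNum, finsum_eq_sum_of_fintype, Nat.card_of_isEmpty,
    Nat.card_eq_fintype_card (α := CompR σ)]
  simp only [compGenus, Finset.sum_add_distrib, Finset.sum_sub_distrib, hV, hE, Finset.sum_const,
    Finset.card_univ]
  push_cast
  ring

lemma card_V_eq : Nat.card G.V = Nat.card (RV σ) + 2 * Nat.card (PairV σ) := by
  rw [← σ.ιV_involutive.card_eq_two_mul_card_quotient, ← Nat.card_sum]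
  exact Nat.card_congr (Equiv.sumCompl (RealV σ)).symm

lemma card_E_eq (hiso : ∀ e, ¬ IsolatedRealE σ e) :
    Nat.card G.E = Nat.card {e : G.E // NonIsolatedRealE σ e} + 2 * Nat.card (PairE σ) := by
  rw [← σ.ιE_involutive.card_eq_two_mul_card_quotient, ← Nat.card_sum]
  refine Nat.card_congr ((Equiv.sumCompl (RealE σ)).symm.trans (Equiv.sumCongr
    (Equiv.subtypeEquivRight fun e => ?_) (Equiv.refl _)))
  exact ⟨fun h => ⟨h, fun v hv => realV_of_mem_of_realE σ hiso h hv⟩, And.left⟩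

lemma IsMGraph.card_quotientGraph_E_add_one (hM : IsMGraph σ) :
    Nat.card (quotientGraph σ).E + 1 = Nat.card (quotientGraph σ).V := by
  have h := hM.2.2
  rw [sNum_eq σ hM.2.1, genus, hM.1.numComponents_eq_one, ← Nat.card_eq_fintype_card,
    ← Nat.card_eq_fintype_card, card_V_eq σ, card_E_eq σ hM.2.1] at h
  change Nat.card (PairE σ) + 1 = Nat.card (CompR σ ⊕ PairV σ)
  rw [Nat.card_sum]
  push_cast at h
  omega

lemma IsMGraph.exists_realV (hM : IsMGraph σ) : ∃ v, RealV σ v := by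
  by_contra! h
  have : IsEmpty (RV σ) := ⟨fun v => h v.1 v.2⟩
  have : IsEmpty (CompR σ) := ⟨fun c => Quotient.inductionOn c isEmptyElim⟩
  have : IsEmpty {e // NonIsolatedRealE σ e} := ⟨fun e => h _ (e.2.2 _ (Sym2.out_fst_mem _))⟩
  have hs := hM.2.2
  rw [sNum_eq σ hM.2.1, Nat.card_of_isEmpty, Nat.card_of_isEmpty, Nat.card_of_isEmpty, genus,
    hM.1.numComponents_eq_one] at hs
  have := hM.1.card_V_le_card_E_add_one
  omega

end Counting

section ChipFiring

open scoped Classical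

variable {G : FinGraph} {σ : RealStructure G} {r : (quotientGraph σ).V}
  (T : RootedSpanningTree (quotientGraph σ) r)

lemma exists_lift_parentEdge {v : G.V} (hv : ¬ RealV σ v) (hvr : quotientMap σ v ≠ r) :
    ∃ e : {e : G.E // σ.ιE e ≠ e}, Quotient.mk _ e = T.parentEdge ⟨_, hvr⟩ ∧
      ∃ p, G.ψ e.1 = s(v, p) ∧ quotientMap σ p = T.parent (quotientMap σ v) := by
  obtain ⟨e₀, he₀⟩ := Quotient.exists_rep (T.parentEdge ⟨_, hvr⟩)
  have hψ := T.ψ_parentEdge ⟨_, hvr⟩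
  rw [← he₀] at hψ
  obtain ⟨a, ha, hav⟩ := Sym2.mem_map.1 (hψ ▸ Sym2.mem_mk_right _ _ : quotientMap σ v ∈ _)
  obtain ⟨e, hee₀, hve⟩ : ∃ e : {e : G.E // σ.ιE e ≠ e},
      Quotient.mk _ e = Quotient.mk σ.ιE_involutive.pairSetoid e₀ ∧ v ∈ G.ψ e.1 := by
    rcases eq_or_eq_ιV_of_quotientMap_eq σ hv hav with rfl | rfl
    · exact ⟨e₀, rfl, ha⟩
    · refine ⟨⟨σ.ιE e₀, fun h => e₀.2 (by rw [σ.ιE_invol] at h; exact h.symm)⟩,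
        σ.ιE_involutive.mk_pairSetoid_eq_iff.2 (Or.inr (σ.ιE_invol e₀).symm), ?_⟩
      rw [σ.compat]
      exact Sym2.mem_map.2 ⟨_, ha, σ.ιV_invol v⟩
  refine ⟨e, hee₀.trans he₀, Sym2.Mem.other hve, (Sym2.other_spec hve).symm, ?_⟩
  have h : (G.ψ e.1).map (quotientMap σ) = s(quotientMap σ v, T.parent (quotientMap σ v)) := by
    rw [← quotientGraph_ψ_mk, hee₀, he₀, T.ψ_parentEdge, Sym2.eq_swap]
  rw [← Sym2.other_spec hve, Sym2.map_mk] at h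
  exact Sym2.congr_right.1 h

/-- `f` fires the vertices of `G` lying over the subtree below the image of `v`; by
`eq_parentEdge_of_mem_subtree` only the two lifts of the parent edge leave that set. -/
lemma exists_Lap_eq_of_not_realV (hM : IsMGraph σ) {v : G.V} (hv : ¬ RealV σ v)
    (hvr : quotientMap σ v ≠ r) :
    ∃ f p, Lap G f = Pi.single p 1 + Pi.single (σ.ιV p) 1 - Pi.single v 1 -
        Pi.single (σ.ιV v) 1 ∧ T.depth (quotientMap σ p) < T.depth (quotientMap σ v) := by
  obtain ⟨e, he, p, hψe, hp⟩ := exists_lift_parentEdge T hv hvr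
  set S := quotientMap σ ⁻¹' T.subtree (quotientMap σ v) with hS
  have hvS : v ∈ S := T.mem_subtree_self _
  have hvS' : σ.ιV v ∈ S := by
    rw [hS, Set.mem_preimage, quotientMap_ιV]
    exact hvS
  have hpS : p ∉ S := by
    rw [hS, Set.mem_preimage, hp]
    exact T.parent_notMem_subtree hvr
  have hpS' : σ.ιV p ∉ S := by
    rw [hS, Set.mem_preimage, quotientMap_ιV]
    exact hpS
  have hψe' : G.ψ (σ.ιE e.1) = s(σ.ιV v, σ.ιV p) := by rw [σ.compat, hψe, Sym2.map_mk]
  have hne : e.1 ≠ σ.ιE e.1 := fun h => e.2 h.symm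
  refine ⟨S.indicator 1, p, ?_, by rw [hp]; exact T.depth_parent_lt _ hvr⟩
  rw [Lap_eq_sum_of_forall_notMem {e.1, σ.ιE e.1}, Finset.sum_pair hne, edgeLap_of_ψ_eq hψe,
    edgeLap_of_ψ_eq hψe']
  · simp only [Set.indicator_of_mem, Set.indicator_of_notMem, hvS, hvS', hpS, hpS',
      not_false_eq_true, Pi.one_apply, zero_sub, sub_zero, Pi.single_neg]
    abel
  intro e' he' a b hab
  simp only [Finset.mem_insert, Finset.mem_singleton] at he'
  suffices a ∈ S ↔ b ∈ S by simp [Set.indicator_apply, this]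
  by_cases hre : RealE σ e'
  · rw [hS, Set.mem_preimage, Set.mem_preimage, quotientMap_eq_of_realE σ hM.2.1 hre hab]
  have hcross : ∀ x y, (quotientGraph σ).ψ (Quotient.mk _ ⟨e', hre⟩) =
      s(quotientMap σ x, quotientMap σ y) → x ∈ S → y ∈ S := by
    intro x y hxy hx
    by_contra hy
    have h := T.eq_parentEdge_of_mem_subtree hM.card_quotientGraph_E_add_one hvr hxy hx hy
    rcases σ.ιE_involutive.mk_pairSetoid_eq_iff.1 (h.trans he.symm) with h | h
    · exact he' (Or.inl h.symm)
    · exact he' (Or.inr (by rw [h, σ.ιE_invol]))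
  have hQ : (quotientGraph σ).ψ (Quotient.mk _ ⟨e', hre⟩) = s(quotientMap σ a, quotientMap σ b) :=
    (quotientGraph_ψ_mk σ ⟨e', hre⟩).trans (by rw [hab]; rfl)
  exact ⟨hcross a b hQ, hcross b a (hQ.trans Sym2.eq_swap)⟩

lemma conjDiv_add (D E : G.V → ℤ) : conjDiv σ (D + E) = conjDiv σ D + conjDiv σ E := rfl

lemma conjDiv_sub (D E : G.V → ℤ) : conjDiv σ (D - E) = conjDiv σ D - conjDiv σ E := rfl

lemma conjDiv_single (y : G.V) (c : ℤ) : conjDiv σ (Pi.single y c) = Pi.single (σ.ιV y) c := by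
  ext x
  simp only [conjDiv, Pi.single_apply, ιV_eq_iff]

noncomputable def depthPotential (D : G.V → ℤ) : ℤ :=
  D ⬝ᵥ fun x => (T.depth (quotientMap σ x) : ℤ)

lemma depthPotential_nonneg {D : G.V → ℤ} (hD : Eff D) : 0 ≤ depthPotential T D :=
  dotProduct_nonneg_of_nonneg hD fun _ => Nat.cast_nonneg _

lemma exists_linEquiv_depthPotential_lt (hM : IsMGraph σ) {D : G.V → ℤ} (hDe : Eff D)
    (hD : IsRealDiv σ D) {v : G.V} (hv : ¬ RealV σ v) (hvr : quotientMap σ v ≠ r)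
    (hDv : D v ≠ 0) :
    ∃ D₁, LinEquiv G D D₁ ∧ Eff D₁ ∧ IsRealDiv σ D₁ ∧
      depthPotential T D₁ < depthPotential T D := by
  obtain ⟨f, p, hf, hp⟩ := exists_Lap_eq_of_not_realV T hM hv hvr
  have hvv : σ.ιV v ≠ v := hv
  have hDv' : D (σ.ιV v) = D v := congrFun hD v
  have hpos : 0 < D v := lt_of_le_of_ne (hDe v) (Ne.symm hDv)
  refine ⟨D + Lap G f, ⟨f, rfl⟩, fun x => ?_, ?_, ?_⟩
  · have := hDe x
    simp only [hf, Pi.add_apply, Pi.sub_apply, Pi.single_apply]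
    rcases eq_or_ne x v with rfl | hxv
    · simp only [hvv.symm, if_false, if_true]
      split_ifs <;> omega
    rcases eq_or_ne x (σ.ιV v) with rfl | hxv'
    · simp only [hvv, hDv', if_false, if_true]
      split_ifs <;> omega
    simp only [hxv, hxv', if_false]
    split_ifs <;> omega
  · rw [IsRealDiv, hf]
    simp only [conjDiv_add, conjDiv_sub, conjDiv_single, σ.ιV_invol,
      show conjDiv σ D = D from hD]
    abel
  · simp only [depthPotential, hf, add_dotProduct, sub_dotProduct, single_dotProduct,
      quotientMap_ιV, one_mul]
    omega

end ChipFiring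

end FinGraph

open FinGraph in
/-- On an M-graph, every effective real divisor is linearly
equivalent to a totally real effective divisor. -/
theorem mGraph_totally_real (G : FinGraph) (σ : RealStructure G)
    (hM : IsMGraph σ) (D : G.V → ℤ) (hD : IsRealDiv σ D) (hDe : Eff D) :
    ∃ D' : G.V → ℤ, LinEquiv G D D' ∧ Eff D' ∧ IsRealDiv σ D' ∧
      (∀ v : G.V, D' v ≠ 0 → RealV σ v) := by
  obtain ⟨v₀, hv₀⟩ := hM.exists_realV σ
  obtain ⟨T⟩ := (hM.1.quotientGraph σ hM.2.1).nonempty_rootedSpanningTree (quotientMap σ v₀)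
  have hroot : ∀ v, ¬ RealV σ v → quotientMap σ v ≠ quotientMap σ v₀ := fun v hv => by
    simp [quotientMap, hv, hv₀]
  have hstep : ∀ D, Eff D ∧ IsRealDiv σ D → ¬ (∀ v, D v ≠ 0 → RealV σ v) →
      ∃ D₁, LinEquiv G D D₁ ∧ (Eff D₁ ∧ IsRealDiv σ D₁) ∧
        (depthPotential T D₁).toNat < (depthPotential T D).toNat := by
    rintro D ⟨hDe, hD⟩ hnot
    push Not at hnot
    obtain ⟨v, hDv, hv⟩ := hnot
    obtain ⟨D₁, hDD₁, hDe₁, hD₁, hlt⟩ :=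
      exists_linEquiv_depthPotential_lt T hM hDe hD hv (hroot v hv) hDv
    have := depthPotential_nonneg T hDe₁
    exact ⟨D₁, hDD₁, ⟨hDe₁, hD₁⟩, by omega⟩
  simpa only [and_assoc] using
    exists_of_descent LinEquiv.refl (fun h₁ h₂ => h₁.trans h₂) _ hstep D ⟨hDe, hD⟩
end
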